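/- Let $A$ be a Noetherian integral domain that is complete with respect to an ideal $J \subseteq A$, and suppose the set $J$ is infinite. Let $(J)$ denote the ideal of $A[[t]]$ generated by $J$, where $t$ is an indeterminate. Let $I_1, \dots, I_N \subseteq A[[t]]$ be prime ideals such that the ideal $(J, t)$ is not contained in $I_i$ for any $1 \leq i \leq N$. Then there exists $c \in (J)$ such that $t + c \notin I_i$ for all $1 \leq i \leq N$. -/

import Mathlib

/-! If every `X + c` with `c ∈ (J)` lay in some `Iᵢ`, then `(J)` would be covered by finitely many
cosets of the subgroups `(J) ∩ Iᵢ`, so by B. H. Neumann's lemma one of them, say for `Iₖ` with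
`(J) ⊄ Iₖ`, would have finite index in `(J)`. Multiplication by an element of `(J) \ Iₖ` embeds
`A⟦X⟧ ⧸ Iₖ` into `(J) ⧸ ((J) ∩ Iₖ)`, so `A⟦X⟧ ⧸ Iₖ` would be a finite domain, `Iₖ` would be maximal
and contain the Jacobson radical of `A⟦X⟧`. That radical contains `(J, X)`, since a power series
is a unit as soon as its constant coefficient is, and `J` lies in the Jacobson radical of the
`J`-adically complete ring `A`. -/

open PowerSeries Pointwise

namespace Ideal

variable {R : Type*} [CommRing R]

theorem IsPrime.isMaximal_of_finite_quotient {P : Ideal R} [P.IsPrime] [Finite (R ⧸ P)] :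
    P.IsMaximal :=
  Quotient.maximal_of_isField _ (Finite.isField_of_domain _)

theorem finite_quotient_of_finiteIndex_addSubgroupOf {P K : Ideal R} [P.IsPrime] (hKP : ¬ K ≤ P)
    [(P.toAddSubgroup.addSubgroupOf K.toAddSubgroup).FiniteIndex] : Finite (R ⧸ P) := by
  obtain ⟨x, hxK, hxP⟩ := SetLike.not_le_iff_exists.mp hKP
  let mulX : R → K ⧸ P.toAddSubgroup.addSubgroupOf K.toAddSubgroup :=
    fun r => QuotientAddGroup.mk ⟨x * r, K.mul_mem_right r hxK⟩
  have mulX_eq_iff (r s : R) : mulX r = mulX s ↔ s - r ∈ P := by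
    rw [QuotientAddGroup.eq, AddSubgroup.mem_addSubgroupOf]
    simp only [Submodule.mem_toAddSubgroup, Submodule.coe_add, Submodule.coe_neg]
    rw [show -(x * r) + x * s = x * (s - r) by ring]
    exact ⟨fun h => (IsPrime.mem_or_mem ‹_› h).resolve_left hxP, fun h => P.mul_mem_left x h⟩
  refine Finite.of_injective (fun y : R ⧸ P => mulX y.out) fun y y' h => ?_
  rw [← Quotient.mk_out y, ← Quotient.mk_out y']
  exact Quotient.eq.mpr ((mulX_eq_iff _ _).mp h.symm)

theorem setOf_add_mem_eq_vadd_addSubgroupOf {P K : Ideal R} {a : R} {c₀ : K} (h : a + c₀ ∈ P) :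
    {c : K | a + c ∈ P} = c₀ +ᵥ (P.toAddSubgroup.addSubgroupOf K.toAddSubgroup : Set K) := by
  ext c
  rw [Set.mem_ofPred_eq, Set.mem_vadd_set_iff_neg_vadd_mem, SetLike.mem_coe,
    AddSubgroup.mem_addSubgroupOf, vadd_eq_add, Submodule.coe_add, Submodule.coe_neg,
    Submodule.mem_toAddSubgroup, show -(c₀ : R) + c = (a + c) - (a + c₀) by ring]
  exact ⟨fun hc => P.sub_mem hc h, fun hc => by simpa only [sub_add_cancel] using P.add_mem hc h⟩

theorem exists_add_notMem_of_infinite_quotient {ι : Type*} [Fintype ι] {P : ι → Ideal R}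
    [∀ i, (P i).IsPrime] (hinf : ∀ i, Infinite (R ⧸ P i)) {K : Ideal R} {a : R}
    (hle : ∀ i, ¬ K ⊔ span {a} ≤ P i) : ∃ c ∈ K, ∀ i, a + c ∉ P i := by
  classical
  by_contra! hcon
  let s := Finset.univ.filter fun i => ∃ c : K, a + c ∈ P i
  have : ∀ i ∈ s, ∃ c : K, a + c ∈ P i := fun i hi => (Finset.mem_filter.mp hi).2
  choose! g hg using this
  have hcover : ⋃ i ∈ s, g i +ᵥ ((P i).toAddSubgroup.addSubgroupOf K.toAddSubgroup : Set K) =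
      Set.univ := by
    refine Set.eq_univ_of_forall fun c => ?_
    obtain ⟨i, hi⟩ := hcon c c.2
    have his : i ∈ s := Finset.mem_filter.mpr ⟨Finset.mem_univ i, c, hi⟩
    rw [Set.mem_iUnion₂]
    exact ⟨i, his, setOf_add_mem_eq_vadd_addSubgroupOf (hg i his) ▸ hi⟩
  obtain ⟨k, hks, hk⟩ := AddSubgroup.exists_finiteIndex_of_leftCoset_cover hcover
  have hKP : ¬ K ≤ P k := fun hKP => hle k <| sup_le hKP <| span_le.mpr <|
    Set.singleton_subset_iff.mpr <| by simpa using (P k).sub_mem (hg k hks) (hKP (g k).2)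
  exact not_finite_iff_infinite.mpr (hinf k) (finite_quotient_of_finiteIndex_addSubgroupOf hKP)

end Ideal

namespace PowerSeries

variable {A : Type*} [CommRing A]

theorem comap_constantCoeff_le_jacobson_bot {J : Ideal A} (hJ : J ≤ (⊥ : Ideal A).jacobson) :
    J.comap (constantCoeff : A⟦X⟧ →+* A) ≤ (⊥ : Ideal A⟦X⟧).jacobson := fun f hf =>
  Ideal.mem_jacobson_bot.mpr fun g => by
    rw [isUnit_iff_constantCoeff, map_add, map_mul, map_one]
    exact Ideal.mem_jacobson_bot.mp (hJ hf) _

theorem map_C_sup_span_X_le_comap_constantCoeff (J : Ideal A) :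
    J.map C ⊔ Ideal.span {X} ≤ J.comap (constantCoeff : A⟦X⟧ →+* A) := by
  refine sup_le ?_ ?_
  · rw [Ideal.map_le_iff_le_comap, Ideal.comap_comap, constantCoeff_comp_C, Ideal.comap_id]
  · rw [Ideal.span_le, Set.singleton_subset_iff, SetLike.mem_coe, Ideal.mem_comap,
      constantCoeff_X]
    exact J.zero_mem

theorem infinite_quotient_of_not_map_C_sup_span_X_le {J : Ideal A}
    (hJ : J ≤ (⊥ : Ideal A).jacobson) {P : Ideal A⟦X⟧} [P.IsPrime]
    (h : ¬ J.map C ⊔ Ideal.span {X} ≤ P) : Infinite (A⟦X⟧ ⧸ P) := by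
  rw [← not_finite_iff_infinite]
  intro _
  have hmax : P.IsMaximal := Ideal.IsPrime.isMaximal_of_finite_quotient
  exact h <| (map_C_sup_span_X_le_comap_constantCoeff J).trans <|
    (comap_constantCoeff_le_jacobson_bot hJ).trans (sInf_le ⟨bot_le, hmax⟩)

end PowerSeries

theorem stmt3_general {A : Type*} [CommRing A]
    (J : Ideal A) [IsAdicComplete J A]
    (N : ℕ) (I : Fin N → Ideal (PowerSeries A)) (hprime : ∀ i, (I i).IsPrime)
    (hns : ∀ i, ¬ (J.map ((PowerSeries.C : A →+* PowerSeries A)) + Ideal.span {PowerSeries.X}) ≤ I i) :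
    ∃ c ∈ J.map ((PowerSeries.C : A →+* PowerSeries A)), ∀ i, PowerSeries.X + c ∉ I i :=
  Ideal.exists_add_notMem_of_infinite_quotient
    (fun i => PowerSeries.infinite_quotient_of_not_map_C_sup_span_X_le
      (IsAdicComplete.le_jacobson_bot J) (hns i)) hns

/-- Translation lemma: let `A` be a Noetherian domain, complete with respect to an ideal `J`
which is infinite as a set. Let `(J)` be the ideal of `A[[t]]` generated by `J`, and let
`I₁, …, I_N` be prime ideals of `A[[t]]` none of which contains the ideal `(J, t)`.
Then there is `c ∈ (J)` with `t + c ∉ Iᵢ` for all `i`. -/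
theorem stmt3 {A : Type*} [CommRing A] [IsDomain A] [IsNoetherianRing A]
    (J : Ideal A) [IsAdicComplete J A] (hJ : (J : Set A).Infinite)
    (N : ℕ) (I : Fin N → Ideal (PowerSeries A)) (hprime : ∀ i, (I i).IsPrime)
    (hns : ∀ i, ¬ (J.map ((PowerSeries.C : A →+* PowerSeries A)) + Ideal.span {PowerSeries.X}) ≤ I i) :
    ∃ c ∈ J.map ((PowerSeries.C : A →+* PowerSeries A)), ∀ i, PowerSeries.X + c ∉ I i :=
  stmt3_general J N I hprime hns
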